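/- Let G be a connected finite undirected multigraph with s, t ∈ V(G), s ≠ t, let W_0, …, W_{q+1} be the bundles of G, and let Z ⊆ E(G) be an (s,t)-cut. There is at most one maximal stretch W_{a,b} = W_a ∪ ⋯ ∪ W_b such that every bundle W_i with a ≤ i ≤ b is affected by Z and W_{a,b} contains both a vertex of R_s(Z) and a vertex of R_t(Z). For any such stretch, every vertex of its left interface lies in R_s(Z) and every vertex of its right interface lies in R_t(Z). Moreover, if Z is a special (s,t)-cut, then such a stretch exists. -/
import Mathlib


/-!
A finite undirected multigraph (parallel edges allowed, no loops) is modelled by a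
vertex type `V`, an edge type `E` (both finite) and an endpoint map `ends : E → Sym2 V`
such that no edge is a loop (`¬ (ends e).IsDiag`).
-/

namespace FlowAug

variable {V E : Type}

/-- Two vertices are adjacent in `G - X` if some edge outside `X` joins them. -/
def Adj (ends : E → Sym2 V) (X : Set E) (u v : V) : Prop :=
  ∃ e, e ∉ X ∧ ends e = s(u, v)

/-- Reachability in `G - X`. -/
def Reach (ends : E → Sym2 V) (X : Set E) : V → V → Prop :=
  Relation.ReflTransGen (Adj ends X)

/-- `R_S(X)` : the set of vertices reachable from the vertex set `S` in `G - X`. -/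
def RS (ends : E → Sym2 V) (X : Set E) (S : Set V) : Set V :=
  {v | ∃ u ∈ S, Reach ends X u v}

/-- `δ(S)` : the set of edges with exactly one endpoint in `S`. -/
def edgeBoundary (ends : E → Sym2 V) (S : Set V) : Set E :=
  {e | ∃ u v, ends e = s(u, v) ∧ u ∈ S ∧ v ∉ S}

/-- `X` is an `(S,T)`-cut. -/
def IsCut (ends : E → Sym2 V) (X : Set E) (S T : Set V) : Prop :=
  RS ends X S ∩ RS ends X T = ∅

/-- `X` is a minimal `(S,T)`-cut: no proper subset of `X` is an `(S,T)`-cut. -/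
def IsMinimalCut (ends : E → Sym2 V) (X : Set E) (S T : Set V) : Prop :=
  IsCut ends X S T ∧ ∀ Y : Set E, Y ⊂ X → ¬ IsCut ends Y S T

/-- `X` is an `(S,T)`-cut of minimum cardinality. -/
def IsMinimumCut (ends : E → Sym2 V) (X : Set E) (S T : Set V) : Prop :=
  IsCut ends X S T ∧ ∀ Y : Set E, IsCut ends Y S T → X.ncard ≤ Y.ncard

/-- `X` is an `(S,T)`-cut that is closest to `S`: every `(S,T)`-cut `X' ≠ X` with
`R_S(X') ⊆ R_S(X)` satisfies `|X'| > |X|`. -/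
def IsClosestCut (ends : E → Sym2 V) (X : Set E) (S T : Set V) : Prop :=
  IsCut ends X S T ∧
    ∀ X' : Set E, IsCut ends X' S T → X' ≠ X →
      RS ends X' S ⊆ RS ends X S → X.ncard < X'.ncard

/-- `λ_G(s,t)` : the minimum cardinality of an `(s,t)`-cut (equivalently, by Menger's
theorem, the maximum number of pairwise edge-disjoint `(s,t)`-paths). -/
noncomputable def lamCut (ends : E → Sym2 V) (s t : V) : ℕ :=
  sInf {n | ∃ X : Set E, IsCut ends X {s} {t} ∧ X.ncard = n}

/-- `Z_{s,t}` : the edges of `Z` with one endpoint in `R_s(Z)` and one in `R_t(Z)`. -/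
def Zst (ends : E → Sym2 V) (s t : V) (Z : Set E) : Set E :=
  {e | e ∈ Z ∧ ∃ u v, ends e = s(u, v) ∧ u ∈ RS ends Z {s} ∧ v ∈ RS ends Z {t}}

/-- `Z` is a special `(s,t)`-cut: `Z` is an `(s,t)`-cut and `Z_{s,t}` is an `(s,t)`-cut. -/
def IsSpecial (ends : E → Sym2 V) (s t : V) (Z : Set E) : Prop :=
  IsCut ends Z {s} {t} ∧ IsCut ends (Zst ends s t Z) {s} {t}

/-- `Z` is eligible for `(s,t)`: special, and every edge of `Z` has its endpoints in
different connected components of `G - Z`. -/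
def IsEligible (ends : E → Sym2 V) (s t : V) (Z : Set E) : Prop :=
  IsSpecial ends s t Z ∧ ∀ e ∈ Z, ∀ u v : V, ends e = s(u, v) → ¬ Reach ends Z u v

/-- `Z` is a star `(s,t)`-cut: an `(s,t)`-cut each of whose edges has exactly one
endpoint in `R_s(Z)`. -/
def IsStarCut (ends : E → Sym2 V) (s t : V) (Z : Set E) : Prop :=
  IsCut ends Z {s} {t} ∧
    ∀ e ∈ Z, ∃ u v : V, ends e = s(u, v) ∧ u ∈ RS ends Z {s} ∧ v ∉ RS ends Z {s}

/-- A path from `s` to `t` in the multigraph described by `ends`, given by its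
sequence of vertices and traversed edges. -/
structure MGPath (V E : Type) (ends : E → Sym2 V) (s t : V) where
  n : ℕ
  vert : Fin (n + 1) → V
  edge : Fin n → E
  vert_zero : vert 0 = s
  vert_last : vert (Fin.last n) = t
  ends_eq : ∀ i : Fin n, ends (edge i) = s(vert i.castSucc, vert i.succ)

/-- A family of paths is (pairwise) edge-disjoint: no edge is used twice, neither on
a single path nor on two different paths. -/
def EdgeDisjoint {ends : E → Sym2 V} {s t : V} {k : ℕ}
    (P : Fin k → MGPath V E ends s t) : Prop :=
  Function.Injective fun p : (Σ i : Fin k, Fin (P i).n) => (P p.1).edge p.2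

/-- `P` is a witnessing `(s,t)`-flow for `Z`: a family of `λ_G(s,t)` pairwise
edge-disjoint `(s,t)`-paths such that every edge of `Z_{s,t}` occurs on a path of `P`
and every path of `P` contains exactly one edge of `Z`. -/
def IsWitnessingFlow (ends : E → Sym2 V) (s t : V) (Z : Set E) {k : ℕ}
    (P : Fin k → MGPath V E ends s t) : Prop :=
  k = lamCut ends s t ∧ EdgeDisjoint P ∧
    (∀ e ∈ Zst ends s t Z, ∃ (i : Fin k) (j : Fin (P i).n), (P i).edge j = e) ∧
    ∀ i : Fin k, ∃! j : Fin (P i).n, (P i).edge j ∈ Z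

/-- The vertices occurring on the paths of a family `P`. -/
def pathVerts {ends : E → Sym2 V} {s t : V} {k : ℕ}
    (P : Fin k → MGPath V E ends s t) : Set V :=
  {v | ∃ (i : Fin k) (m : Fin ((P i).n + 1)), (P i).vert m = v}

/-- The edges occurring on the paths of a family `P`. -/
def pathEdges {ends : E → Sym2 V} {s t : V} {k : ℕ}
    (P : Fin k → MGPath V E ends s t) : Set E :=
  {e | ∃ (i : Fin k) (j : Fin (P i).n), (P i).edge j = e}

/-- The arcs obtained by orienting every edge of every path of `P` in the forward
direction (from `s` towards `t`). -/
def DirAdjOnFlow {ends : E → Sym2 V} {s t : V} {k : ℕ}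
    (P : Fin k → MGPath V E ends s t) (u v : V) : Prop :=
  ∃ (i : Fin k) (l : Fin (P i).n), (P i).vert l.castSucc = u ∧ (P i).vert l.succ = v

/-- `N[S]` : the closed neighborhood of `S`. -/
def closedNbhd (ends : E → Sym2 V) (S : Set V) : Set V :=
  S ∪ {v | ∃ u ∈ S, ∃ e : E, ends e = s(u, v)}

/-- `X` is the minimum `(s,t)`-cut closest to `s` among all minimum `(s,t)`-cuts
satisfying the property `P`. -/
def IsClosestMinCutAmong (ends : E → Sym2 V) (s t : V) (P : Set E → Prop)
    (X : Set E) : Prop :=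
  IsMinimumCut ends X {s} {t} ∧ P X ∧
    ∀ Y : Set E, IsMinimumCut ends Y {s} {t} → P Y → Y ≠ X →
      RS ends Y {s} ⊆ RS ends X {s} → X.ncard < Y.ncard

/-- `C 0, …, C p` is the canonical sequence of non-crossing minimum `(s,t)`-cuts:
`C 0` is the unique minimum `(s,t)`-cut closest to `s`; `C i` is the unique minimum
`(s,t)`-cut closest to `s` among all minimum `(s,t)`-cuts `X` with
`N[R_s(C (i-1))] ⊆ R_s(X)`; and `p` is the largest index for which such a cut exists. -/
def CanonSeq (ends : E → Sym2 V) (s t : V) (p : ℕ) (C : ℕ → Set E) : Prop :=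
  IsClosestMinCutAmong ends s t (fun _ => True) (C 0) ∧
    (∀ i : ℕ, 0 < i → i ≤ p →
      IsClosestMinCutAmong ends s t
        (fun X => closedNbhd ends (RS ends (C (i - 1)) {s}) ⊆ RS ends X {s}) (C i)) ∧
    ¬ ∃ X : Set E, IsMinimumCut ends X {s} {t} ∧
        closedNbhd ends (RS ends (C p) {s}) ⊆ RS ends X {s}

/-- The blocks `V_0, …, V_{p+1}` associated with the canonical sequence of cuts. -/
def blockOf (ends : E → Sym2 V) (s : V) (p : ℕ) (C : ℕ → Set E) (i : ℕ) : Set V :=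
  if i = 0 then RS ends (C 0) {s}
  else if i ≤ p then RS ends (C i) {s} \ RS ends (C (i - 1)) {s}
  else Set.univ \ RS ends (C p) {s}

/-- Adjacency inside the induced subgraph `G[B]`. -/
def AdjIn (ends : E → Sym2 V) (B : Set V) (u v : V) : Prop :=
  u ∈ B ∧ v ∈ B ∧ ∃ e : E, ends e = s(u, v)

/-- Reachability inside the induced subgraph `G[B]`. -/
def ReachIn (ends : E → Sym2 V) (B : Set V) : V → V → Prop :=
  Relation.ReflTransGen (AdjIn ends B)

/-- The induced subgraph `G[B]` is connected. -/
def ConnIn (ends : E → Sym2 V) (B : Set V) : Prop :=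
  ∀ u ∈ B, ∀ v ∈ B, ReachIn ends B u v

/-- The connected component of `u` in the induced subgraph `G[B]`. -/
def compIn (ends : E → Sym2 V) (B : Set V) (u : V) : Set V :=
  {v | v ∈ B ∧ ReachIn ends B u v}

/-- The set of connected components of the induced subgraph `G[B]`. -/
def componentsIn (ends : E → Sym2 V) (B : Set V) : Set (Set V) :=
  {K | ∃ u ∈ B, K = compIn ends B u}

/-- The union of the blocks `V_a, …, V_b`. -/
def unionBlocks (ends : E → Sym2 V) (s : V) (p : ℕ) (C : ℕ → Set E)
    (a b : ℕ) : Set V :=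
  ⋃ j ∈ Set.Icc a b, blockOf ends s p C j

/-- `st` encodes the decomposition of the blocks `V_0, …, V_{p+1}` into bundles
`W_0, …, W_{q+1}`: bundle `W_i` consists of the blocks `V_{st i}, …, V_{st (i+1) - 1}`.
`W_0 = V_0`, and each further bundle is greedily either a single connected block, or a
maximal union of contiguous blocks inducing a disconnected subgraph. -/
def IsBundleSeq (ends : E → Sym2 V) (s : V) (p : ℕ) (C : ℕ → Set E)
    (q : ℕ) (st : ℕ → ℕ) : Prop :=
  st 0 = 0 ∧ st 1 = 1 ∧ st (q + 2) = p + 2 ∧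
    (∀ i j : ℕ, i < j → j ≤ q + 2 → st i < st j) ∧
    ∀ i : ℕ, 1 ≤ i → i ≤ q + 1 →
      (st (i + 1) = st i + 1 ∧ ConnIn ends (blockOf ends s p C (st i))) ∨
      (¬ ConnIn ends (blockOf ends s p C (st i)) ∧
        ¬ ConnIn ends (unionBlocks ends s p C (st i) (st (i + 1) - 1)) ∧
        ∀ j : ℕ, st (i + 1) - 1 < j → j ≤ p + 1 →
          ConnIn ends (unionBlocks ends s p C (st i) j))

/-- The bundle `W_i`. -/
def bundleOf (ends : E → Sym2 V) (s : V) (p : ℕ) (C : ℕ → Set E) (st : ℕ → ℕ)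
    (i : ℕ) : Set V :=
  unionBlocks ends s p C (st i) (st (i + 1) - 1)

/-- `C'_i` : the cut (among `C_0, …, C_p`) separating bundle `W_i` from `W_{i+1}`. -/
def interCut (C : ℕ → Set E) (st : ℕ → ℕ) (i : ℕ) : Set E :=
  C (st (i + 1) - 1)

/-- A bundle `W` is unaffected by `Z` if `N[W]` is contained in a single connected
component of `G - Z`. -/
def Unaffected (ends : E → Sym2 V) (Z : Set E) (W : Set V) : Prop :=
  ∀ u ∈ closedNbhd ends W, ∀ v ∈ closedNbhd ends W, Reach ends Z u v

/-- The stretch `W_{a,b} = W_a ∪ ⋯ ∪ W_b` of bundles. -/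
def stretchSet (ends : E → Sym2 V) (s : V) (p : ℕ) (C : ℕ → Set E) (st : ℕ → ℕ)
    (a b : ℕ) : Set V :=
  ⋃ i ∈ Set.Icc a b, bundleOf ends s p C st i

/-- The left interface of a stretch starting at bundle `W_a`. -/
def leftInterface (ends : E → Sym2 V) (s : V) (p : ℕ) (C : ℕ → Set E) (st : ℕ → ℕ)
    (a : ℕ) : Set V :=
  if a = 0 then {s}
  else {v | v ∈ bundleOf ends s p C st a ∧ ∃ e ∈ interCut C st (a - 1), v ∈ ends e}

/-- The right interface of a stretch ending at bundle `W_b`. -/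
def rightInterface (ends : E → Sym2 V) (s t : V) (p : ℕ) (C : ℕ → Set E)
    (st : ℕ → ℕ) (q b : ℕ) : Set V :=
  if b = q + 1 then {t}
  else {v | v ∈ bundleOf ends s p C st b ∧ ∃ e ∈ interCut C st b, v ∈ ends e}

/-- `W_{a,b}` is a maximal stretch of bundles all affected by `Z`. -/
def MaxAffStretch (ends : E → Sym2 V) (s : V) (p : ℕ) (C : ℕ → Set E)
    (st : ℕ → ℕ) (q : ℕ) (Z : Set E) (a b : ℕ) : Prop :=
  a ≤ b ∧ b ≤ q + 1 ∧
    (∀ i : ℕ, a ≤ i → i ≤ b → ¬ Unaffected ends Z (bundleOf ends s p C st i)) ∧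
    (a = 0 ∨ Unaffected ends Z (bundleOf ends s p C st (a - 1))) ∧
    (b = q + 1 ∨ Unaffected ends Z (bundleOf ends s p C st (b + 1)))

/-- `W_{a,b}` is a maximal stretch of bundles affected by `Z` containing both a vertex
reachable from `s` and a vertex reachable from `t` in `G - Z`. -/
def StronglyAffStretch (ends : E → Sym2 V) (s t : V) (p : ℕ) (C : ℕ → Set E)
    (st : ℕ → ℕ) (q : ℕ) (Z : Set E) (a b : ℕ) : Prop :=
  MaxAffStretch ends s p C st q Z a b ∧
    (stretchSet ends s p C st a b ∩ RS ends Z {s}).Nonempty ∧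
    (stretchSet ends s p C st a b ∩ RS ends Z {t}).Nonempty

/-- Adjacency inside the induced subgraph `G[B]` avoiding the edge set `X`. -/
def AdjInX (ends : E → Sym2 V) (B : Set V) (X : Set E) (u v : V) : Prop :=
  u ∈ B ∧ v ∈ B ∧ ∃ e, e ∉ X ∧ ends e = s(u, v)

/-- Reachability inside `G[B] - X`. -/
def ReachInX (ends : E → Sym2 V) (B : Set V) (X : Set E) : V → V → Prop :=
  Relation.ReflTransGen (AdjInX ends B X)

/-- `X` is a star `(a,b)`-cut of the induced subgraph `H = G[B]`: in `H - X` no path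
connects `a` and `b`, and every edge of `X` has exactly one endpoint reachable from
`a` in `H - X`. -/
def IsStarCutIn (ends : E → Sym2 V) (B : Set V) (a b : V) (X : Set E) : Prop :=
  ¬ ReachInX ends B X a b ∧
    ∀ e ∈ X, ∃ u v : V, ends e = s(u, v) ∧
      ReachInX ends B X a u ∧ ¬ ReachInX ends B X a v

end FlowAug

namespace FlowAug

/-! ### Auxiliary lemmas -/

section Aux

variable {V E : Type}

theorem adj_symm {ends : E → Sym2 V} {X : Set E} {u v : V}
    (h : Adj ends X u v) : Adj ends X v u := by
  obtain ⟨e, he, h2⟩ := h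
  exact ⟨e, he, by rw [h2, Sym2.eq_swap]⟩

theorem reach_symm {ends : E → Sym2 V} {X : Set E} {u v : V}
    (h : Reach ends X u v) : Reach ends X v u := by
  induction h with
  | refl => exact .refl
  | tail _ hadj ih =>
      exact Relation.ReflTransGen.trans (Relation.ReflTransGen.single (adj_symm hadj)) ih

theorem mem_RS_single {ends : E → Sym2 V} {X : Set E} {u v : V} :
    v ∈ RS ends X {u} ↔ Reach ends X u v := by
  constructor
  · rintro ⟨w, rfl, hr⟩; exact hr
  · intro h; exact ⟨u, rfl, h⟩

theorem RS_adj {ends : E → Sym2 V} {X : Set E} {S : Set V} {v w : V}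
    (hv : v ∈ RS ends X S) (h : Adj ends X v w) : w ∈ RS ends X S := by
  obtain ⟨u, hu, hr⟩ := hv; exact ⟨u, hu, hr.tail h⟩

theorem RS_reach {ends : E → Sym2 V} {X : Set E} {S : Set V} {v w : V}
    (hv : v ∈ RS ends X S) (h : Reach ends X v w) : w ∈ RS ends X S := by
  obtain ⟨u, hu, hr⟩ := hv; exact ⟨u, hu, hr.trans h⟩

theorem cut_not_both {ends : E → Sym2 V} {X : Set E} {s t x : V}
    (h : IsCut ends X {s} {t}) (hs : x ∈ RS ends X {s}) (ht : x ∈ RS ends X {t}) : False :=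
  Set.eq_empty_iff_forall_notMem.mp h x ⟨hs, ht⟩

theorem RS_anti {ends : E → Sym2 V} {X Y : Set E} (hXY : X ⊆ Y) {S : Set V} :
    RS ends Y S ⊆ RS ends X S := by
  rintro w ⟨u0, hu0, hr⟩
  refine ⟨u0, hu0, ?_⟩
  induction hr with
  | refl => exact .refl
  | tail _ hadj ih =>
      obtain ⟨f, hf, hends⟩ := hadj
      exact ih.tail ⟨f, fun hx => hf (hXY hx), hends⟩

theorem rs_sdiff_eq {ends : E → Sym2 V} {X : Set E} {S : Set V} {e : E} {u v : V}
    (heX : e ∈ X) (hev : ends e = s(u, v))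
    (h : (u ∈ RS ends X S ∧ v ∈ RS ends X S) ∨ (u ∉ RS ends X S ∧ v ∉ RS ends X S)) :
    RS ends (X \ {e}) S = RS ends X S := by
  apply Set.Subset.antisymm
  · rintro w ⟨u0, hu0, hr⟩
    induction hr with
    | refl => exact ⟨u0, hu0, .refl⟩
    | @tail b c hab hbc ih =>
        obtain ⟨f, hf, hends⟩ := hbc
        by_cases hfe : f = e
        · subst hfe
          rw [hev] at hends
          rcases Sym2.eq_iff.mp hends with ⟨rfl, rfl⟩ | ⟨rfl, rfl⟩
          · rcases h with hin | hout
            · exact hin.2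
            · exact absurd ih hout.1
          · rcases h with hin | hout
            · exact hin.1
            · exact absurd ih hout.2
        · have hfX : f ∉ X := fun hx => hf ⟨hx, hfe⟩
          exact RS_adj ih ⟨f, hfX, hends⟩
  · exact RS_anti Set.diff_subset

theorem rs_t_disj {ends : E → Sym2 V} {X : Set E} {s t : V} (hcut : IsCut ends X {s} {t})
    {e : E} {u v : V} (hev : ends e = s(u, v))
    (hu : u ∉ RS ends X {s}) (hv : v ∉ RS ends X {s}) :
    ∀ w ∈ RS ends (X \ {e}) {t}, w ∉ RS ends X {s} := by
  rintro w ⟨t0, rfl, hr⟩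
  induction hr with
  | refl => exact fun hs => cut_not_both hcut hs (mem_RS_single.mpr .refl)
  | @tail b c hab hbc ih =>
      intro hcs
      obtain ⟨f, hf, hends⟩ := hbc
      by_cases hfe : f = e
      · subst hfe
        rw [hev] at hends
        rcases Sym2.eq_iff.mp hends with ⟨rfl, rfl⟩ | ⟨rfl, rfl⟩
        · exact hv hcs
        · exact hu hcs
      · have hfX : f ∉ X := fun hx => hf ⟨hx, hfe⟩
        exact ih (RS_adj hcs ⟨f, hfX, by rw [hends, Sym2.eq_swap]⟩)

theorem mincut_cross [Fintype E] {ends : E → Sym2 V} {X : Set E} {s t : V}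
    (hmin : IsMinimumCut ends X {s} {t}) {e : E} (heX : e ∈ X) {u v : V}
    (hev : ends e = s(u, v)) :
    (u ∈ RS ends X {s} ∧ v ∉ RS ends X {s}) ∨ (v ∈ RS ends X {s} ∧ u ∉ RS ends X {s}) := by
  by_contra hcon
  push_neg at hcon
  have h : (u ∈ RS ends X {s} ∧ v ∈ RS ends X {s}) ∨
      (u ∉ RS ends X {s} ∧ v ∉ RS ends X {s}) := by tauto
  have hYs : RS ends (X \ {e}) {s} = RS ends X {s} := rs_sdiff_eq heX hev h
  have hcut : IsCut ends (X \ {e}) {s} {t} := by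
    rcases h with hin | hout
    · have hYt : RS ends (X \ {e}) {t} = RS ends X {t} :=
        rs_sdiff_eq heX hev (Or.inr ⟨fun hu => cut_not_both hmin.1 hin.1 hu,
          fun hv => cut_not_both hmin.1 hin.2 hv⟩)
      rw [IsCut, hYs, hYt]; exact hmin.1
    · rw [IsCut, hYs]
      apply Set.eq_empty_iff_forall_notMem.mpr
      rintro x ⟨hxs, hxt⟩
      exact rs_t_disj hmin.1 hev hout.1 hout.2 x hxt hxs
  have hssub : X \ {e} ⊂ X := by
    constructor
    · exact Set.diff_subset
    · intro hsub
      exact (hsub heX).2 rfl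
  have h1 := hmin.2 _ hcut
  have h2 := Set.ncard_lt_ncard hssub (Set.toFinite X)
  omega

open Classical in
/-- The index of the block containing a vertex. -/
noncomputable def blkIdx (ends : E → Sym2 V) (s : V) (p : ℕ) (C : ℕ → Set E) (v : V) : ℕ :=
  if h : v ∈ RS ends (C p) {s} then
    Nat.find (⟨p, h⟩ : ∃ i, v ∈ RS ends (C i) {s})
  else p + 1

open Classical in
/-- The index of the bundle containing a vertex. -/
noncomputable def bdlIdx (ends : E → Sym2 V) (s : V) (p : ℕ) (C : ℕ → Set E)
    (st : ℕ → ℕ) (q : ℕ) (v : V) : ℕ :=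
  Nat.findGreatest (fun m => st m ≤ blkIdx ends s p C v) (q + 1)

theorem RS_chain {ends : E → Sym2 V} {s t : V} {p : ℕ} {C : ℕ → Set E}
    (hC : CanonSeq ends s t p C) :
    ∀ {i j : ℕ}, i ≤ j → j ≤ p → RS ends (C i) {s} ⊆ RS ends (C j) {s} := by
  intro i j
  induction j with
  | zero =>
      intro hij _
      have : i = 0 := by omega
      subst this; exact subset_rfl
  | succ j ih =>
      intro hij hjp
      rcases Nat.eq_or_lt_of_le hij with rfl | hlt
      · exact subset_rfl
      · refine (ih (by omega) (by omega)).trans ?_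
        have h2 := (hC.2.1 (j + 1) (by omega) hjp).2.1
        simp only [Nat.add_sub_cancel] at h2
        exact fun v hv => h2 (Or.inl hv)

theorem mem_RS_iff_blkIdx_le {ends : E → Sym2 V} {s t : V} {p : ℕ} {C : ℕ → Set E}
    (hC : CanonSeq ends s t p C) {i : ℕ} (hip : i ≤ p) {v : V} :
    v ∈ RS ends (C i) {s} ↔ blkIdx ends s p C v ≤ i := by
  classical
  constructor
  · intro hv
    have hp : v ∈ RS ends (C p) {s} := RS_chain hC hip le_rfl hv
    rw [blkIdx, dif_pos hp]
    exact Nat.find_min' _ hv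
  · intro hle
    by_cases h : v ∈ RS ends (C p) {s}
    · rw [blkIdx, dif_pos h] at hle
      exact RS_chain hC hle hip (Nat.find_spec (⟨p, h⟩ : ∃ i, v ∈ RS ends (C i) {s}))
    · rw [blkIdx, dif_neg h] at hle
      omega

theorem blkIdx_le {ends : E → Sym2 V} (s : V) {t : V} {p : ℕ} {C : ℕ → Set E}
    (hC : CanonSeq ends s t p C) (v : V) : blkIdx ends s p C v ≤ p + 1 := by
  classical
  rw [blkIdx]
  split
  · next h => exact (Nat.find_min' _ h).trans (by omega)
  · exact le_rfl

theorem mem_blockOf_iff {ends : E → Sym2 V} {s t : V} {p : ℕ} {C : ℕ → Set E}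
    (hC : CanonSeq ends s t p C) {i : ℕ} (hi : i ≤ p + 1) {v : V} :
    v ∈ blockOf ends s p C i ↔ blkIdx ends s p C v = i := by
  have hle := blkIdx_le s hC v
  unfold blockOf
  split_ifs with h0 hip
  · subst h0
    rw [mem_RS_iff_blkIdx_le hC (by omega)]
    omega
  · rw [Set.mem_diff, mem_RS_iff_blkIdx_le hC hip,
      mem_RS_iff_blkIdx_le hC (by omega : i - 1 ≤ p)]
    omega
  · have : i = p + 1 := by omega
    subst this
    rw [Set.mem_diff, mem_RS_iff_blkIdx_le hC le_rfl]
    simp only [Set.mem_univ, true_and]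
    omega

theorem blkIdx_adj {ends : E → Sym2 V} {s t : V} {p : ℕ} {C : ℕ → Set E}
    (hC : CanonSeq ends s t p C) {e : E} {u v : V} (hev : ends e = s(u, v)) :
    blkIdx ends s p C v ≤ blkIdx ends s p C u + 1 := by
  by_cases hip : blkIdx ends s p C u + 1 ≤ p
  · have hu : u ∈ RS ends (C (blkIdx ends s p C u)) {s} :=
      (mem_RS_iff_blkIdx_le hC (by omega)).mpr le_rfl
    have h2 := (hC.2.1 (blkIdx ends s p C u + 1) (by omega) hip).2.1
    simp only [Nat.add_sub_cancel] at h2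
    have hv : v ∈ RS ends (C (blkIdx ends s p C u + 1)) {s} := h2 (Or.inr ⟨u, hu, e, hev⟩)
    exact (mem_RS_iff_blkIdx_le hC hip).mp hv
  · have := blkIdx_le s hC v
    omega

theorem canon_min {ends : E → Sym2 V} {s t : V} {p : ℕ} {C : ℕ → Set E}
    (hC : CanonSeq ends s t p C) {i : ℕ} (hip : i ≤ p) :
    IsMinimumCut ends (C i) {s} {t} := by
  rcases Nat.eq_zero_or_pos i with rfl | hpos
  · exact hC.1.1
  · exact (hC.2.1 i hpos hip).1

theorem blkIdx_s {ends : E → Sym2 V} {s t : V} {p : ℕ} {C : ℕ → Set E}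
    (hC : CanonSeq ends s t p C) : blkIdx ends s p C s = 0 := by
  have h1 : s ∈ RS ends (C 0) {s} := ⟨s, rfl, .refl⟩
  have := (mem_RS_iff_blkIdx_le hC (Nat.zero_le p)).mp h1
  omega

theorem blkIdx_t {ends : E → Sym2 V} {s t : V} {p : ℕ} {C : ℕ → Set E}
    (hC : CanonSeq ends s t p C) : blkIdx ends s p C t = p + 1 := by
  classical
  have ht : t ∉ RS ends (C p) {s} := fun h =>
    cut_not_both (canon_min hC le_rfl).1 h (mem_RS_single.mpr .refl)
  rw [blkIdx, dif_neg ht]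

theorem st_le_st {st : ℕ → ℕ} {q : ℕ}
    (hW4 : ∀ i j : ℕ, i < j → j ≤ q + 2 → st i < st j)
    {i j : ℕ} (hij : i ≤ j) (hj : j ≤ q + 2) : st i ≤ st j := by
  rcases Nat.eq_or_lt_of_le hij with rfl | h
  · exact le_rfl
  · exact (hW4 _ _ h hj).le

theorem bdlIdx_spec {ends : E → Sym2 V} {s t : V} {p : ℕ} {C : ℕ → Set E}
    (hC : CanonSeq ends s t p C) {q : ℕ} {st : ℕ → ℕ}
    (hW : IsBundleSeq ends s p C q st) (v : V) :
    bdlIdx ends s p C st q v ≤ q + 1 ∧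
    st (bdlIdx ends s p C st q v) ≤ blkIdx ends s p C v ∧
    blkIdx ends s p C v < st (bdlIdx ends s p C st q v + 1) := by
  classical
  have hble := blkIdx_le s hC v
  unfold bdlIdx
  set g := Nat.findGreatest (fun m => st m ≤ blkIdx ends s p C v) (q + 1) with hg
  have h1 : g ≤ q + 1 := Nat.findGreatest_le _
  have h0 : st 0 ≤ blkIdx ends s p C v := by rw [hW.1]; omega
  have h2 : st g ≤ blkIdx ends s p C v := by
    rw [hg]; exact Nat.findGreatest_spec (P := fun m => st m ≤ blkIdx ends s p C v) (Nat.zero_le _) h0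
  refine ⟨h1, h2, ?_⟩
  rcases Nat.eq_or_lt_of_le h1 with heq | hlt
  · rw [heq, hW.2.2.1]
    omega
  · by_contra hcon
    push_neg at hcon
    have hge := Nat.le_findGreatest (P := fun m => st m ≤ blkIdx ends s p C v)
      (show g + 1 ≤ q + 1 by omega) hcon
    rw [← hg] at hge
    omega

theorem bdlIdx_unique {ends : E → Sym2 V} {s t : V} {p : ℕ} {C : ℕ → Set E}
    (hC : CanonSeq ends s t p C) {q : ℕ} {st : ℕ → ℕ}
    (hW : IsBundleSeq ends s p C q st) {v : V} {m : ℕ} (hm : m ≤ q + 1)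
    (h1 : st m ≤ blkIdx ends s p C v) (h2 : blkIdx ends s p C v < st (m + 1)) :
    bdlIdx ends s p C st q v = m := by
  obtain ⟨hb1, hb2, hb3⟩ := bdlIdx_spec hC hW v
  by_contra hne
  rcases Nat.lt_or_ge (bdlIdx ends s p C st q v) m with hlt | hge
  · have := st_le_st hW.2.2.2.1 (show bdlIdx ends s p C st q v + 1 ≤ m by omega)
      (by omega)
    omega
  · have hgt : m < bdlIdx ends s p C st q v := by omega
    have := st_le_st hW.2.2.2.1 (show m + 1 ≤ bdlIdx ends s p C st q v by omega)
      (by omega)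
    omega

theorem mem_bundleOf_iff {ends : E → Sym2 V} {s t : V} {p : ℕ} {C : ℕ → Set E}
    (hC : CanonSeq ends s t p C) {q : ℕ} {st : ℕ → ℕ}
    (hW : IsBundleSeq ends s p C q st) {m : ℕ} (hm : m ≤ q + 1) {v : V} :
    v ∈ bundleOf ends s p C st m ↔ bdlIdx ends s p C st q v = m := by
  have hst2 : st (m + 1) ≤ p + 2 := by
    rw [← hW.2.2.1]
    exact st_le_st hW.2.2.2.1 (by omega) le_rfl
  have hstpos : st m < st (m + 1) := hW.2.2.2.1 m (m + 1) (by omega) (by omega)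
  constructor
  · intro hvm
    rw [bundleOf, unionBlocks] at hvm
    simp only [Set.mem_iUnion, Set.mem_Icc, exists_prop] at hvm
    obtain ⟨j, ⟨hj1, hj2⟩, hvj⟩ := hvm
    have hjp : j ≤ p + 1 := by omega
    have hbj := (mem_blockOf_iff hC hjp).mp hvj
    exact bdlIdx_unique hC hW hm (by omega) (by omega)
  · intro hveq
    obtain ⟨hb1, hb2, hb3⟩ := bdlIdx_spec hC hW v
    rw [hveq] at hb2 hb3
    have hble := blkIdx_le s hC v
    rw [bundleOf, unionBlocks]
    simp only [Set.mem_iUnion, Set.mem_Icc, exists_prop]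
    exact ⟨blkIdx ends s p C v, ⟨hb2, by omega⟩, (mem_blockOf_iff hC (by omega)).mpr rfl⟩

theorem bdlIdx_adj {ends : E → Sym2 V} {s t : V} {p : ℕ} {C : ℕ → Set E}
    (hC : CanonSeq ends s t p C) {q : ℕ} {st : ℕ → ℕ}
    (hW : IsBundleSeq ends s p C q st) {e : E} {u v : V} (hev : ends e = s(u, v)) :
    bdlIdx ends s p C st q v ≤ bdlIdx ends s p C st q u + 1 := by
  obtain ⟨hu1, hu2, hu3⟩ := bdlIdx_spec hC hW u
  obtain ⟨hv1, hv2, hv3⟩ := bdlIdx_spec hC hW v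
  have hblk := blkIdx_adj hC hev
  by_contra hcon
  push_neg at hcon
  have h1 : st (bdlIdx ends s p C st q u + 1) < st (bdlIdx ends s p C st q v) :=
    hW.2.2.2.1 _ _ (by omega) (by omega)
  omega

theorem bdlIdx_s {ends : E → Sym2 V} {s t : V} {p : ℕ} {C : ℕ → Set E}
    (hC : CanonSeq ends s t p C) {q : ℕ} {st : ℕ → ℕ}
    (hW : IsBundleSeq ends s p C q st) : bdlIdx ends s p C st q s = 0 := by
  have h0 := blkIdx_s hC
  apply bdlIdx_unique hC hW (by omega)
  · rw [h0, hW.1]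
  · rw [h0, hW.2.1]; omega

theorem bdlIdx_t {ends : E → Sym2 V} {s t : V} {p : ℕ} {C : ℕ → Set E}
    (hC : CanonSeq ends s t p C) {q : ℕ} {st : ℕ → ℕ}
    (hW : IsBundleSeq ends s p C q st) : bdlIdx ends s p C st q t = q + 1 := by
  have h0 := blkIdx_t hC
  have hstq : st (q + 1) < st (q + 2) := hW.2.2.2.1 (q + 1) (q + 2) (by omega) le_rfl
  apply bdlIdx_unique hC hW le_rfl
  · rw [h0]
    rw [hW.2.2.1] at hstq
    omega
  · rw [h0, hW.2.2.1]; omega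

theorem crossing {ends : E → Sym2 V} {s t : V} {p : ℕ} {C : ℕ → Set E}
    (hC : CanonSeq ends s t p C) {q : ℕ} {st : ℕ → ℕ}
    (hW : IsBundleSeq ends s p C q st) {X : Set E} {x y : V}
    (h : Reach ends X x y) :
    ∀ m, bdlIdx ends s p C st q x ≤ m → m ≤ bdlIdx ends s p C st q y →
      ∃ w, bdlIdx ends s p C st q w = m ∧ Reach ends X x w := by
  induction h with
  | refl =>
      intro m h1 h2
      exact ⟨x, by omega, .refl⟩
  | @tail b c hab hbc ih =>
      intro m h1 h2
      by_cases hm : m ≤ bdlIdx ends s p C st q b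
      · exact ih m h1 hm
      · have hbc' := hbc
        obtain ⟨e, he, hends⟩ := hbc'
        have hadjb := bdlIdx_adj hC hW hends
        have hmc : m = bdlIdx ends s p C st q c := by omega
        exact ⟨c, hmc.symm, hab.tail hbc⟩

end Aux

/-- For an `(s,t)`-cut `Z`: there is at most one maximal stretch of
bundles all affected by `Z` containing both a vertex of `R_s(Z)` and a vertex of
`R_t(Z)`; for any such stretch the left interface lies in `R_s(Z)` and the right
interface in `R_t(Z)`; and if `Z` is a special `(s,t)`-cut then such a stretch
exists. -/
theorem strongly_affected_stretch {V E : Type} [Fintype V] [Fintype E]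
    (ends : E → Sym2 V) (hloop : ∀ e, ¬ (ends e).IsDiag)
    (hconn : ∀ u v : V, Reach ends (∅ : Set E) u v)
    (s t : V) (hst : s ≠ t)
    (p : ℕ) (C : ℕ → Set E) (hC : CanonSeq ends s t p C)
    (q : ℕ) (st : ℕ → ℕ) (hW : IsBundleSeq ends s p C q st)
    (Z : Set E) (hZ : IsCut ends Z {s} {t}) :
    (∀ a b a' b' : ℕ, StronglyAffStretch ends s t p C st q Z a b →
        StronglyAffStretch ends s t p C st q Z a' b' → a = a' ∧ b = b') ∧
    (∀ a b : ℕ, StronglyAffStretch ends s t p C st q Z a b →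
        leftInterface ends s p C st a ⊆ RS ends Z {s} ∧
        rightInterface ends s t p C st q b ⊆ RS ends Z {t}) ∧
    (IsSpecial ends s t Z → ∃ a b : ℕ, StronglyAffStretch ends s t p C st q Z a b) := by
  classical
  have hBs : bdlIdx ends s p C st q s = 0 := bdlIdx_s hC hW
  have hBt : bdlIdx ends s p C st q t = q + 1 := bdlIdx_t hC hW
  have hbdl : ∀ m, m ≤ q + 1 → ∀ v : V,
      v ∈ bundleOf ends s p C st m ↔ bdlIdx ends s p C st q v = m :=
    fun m hm v => mem_bundleOf_iff hC hW hm
  have hstr : ∀ a b : ℕ, ∀ x : V, b ≤ q + 1 → x ∈ stretchSet ends s p C st a b →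
      a ≤ bdlIdx ends s p C st q x ∧ bdlIdx ends s p C st q x ≤ b := by
    intro a b x hb hx
    rw [stretchSet] at hx
    simp only [Set.mem_iUnion, Set.mem_Icc, exists_prop] at hx
    obtain ⟨m, ⟨hm1, hm2⟩, hxm⟩ := hx
    have := (hbdl m (by omega) x).mp hxm
    omega
  have hcrossS : ∀ m : ℕ, ∀ x : V, x ∈ RS ends Z {s} → m ≤ bdlIdx ends s p C st q x →
      ∃ w, bdlIdx ends s p C st q w = m ∧ w ∈ RS ends Z {s} := by
    intro m x hx hm
    have hr : Reach ends Z s x := mem_RS_single.mp hx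
    obtain ⟨w, hw1, hw2⟩ := crossing hC hW hr m (by omega) hm
    exact ⟨w, hw1, mem_RS_single.mpr hw2⟩
  have hcrossT : ∀ m : ℕ, ∀ x : V, x ∈ RS ends Z {t} → m ≤ q + 1 →
      bdlIdx ends s p C st q x ≤ m →
      ∃ w, bdlIdx ends s p C st q w = m ∧ w ∈ RS ends Z {t} := by
    intro m x hx hm hxm
    have hr : Reach ends Z t x := mem_RS_single.mp hx
    obtain ⟨w, hw1, hw2⟩ := crossing hC hW (reach_symm hr) m hxm (by omega)
    exact ⟨w, hw1, mem_RS_single.mpr (hr.trans hw2)⟩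
  -- no two strongly affected stretches can be disjoint
  have hdisj : ∀ a b a' b' : ℕ, StronglyAffStretch ends s t p C st q Z a b →
      StronglyAffStretch ends s t p C st q Z a' b' → b < a' → False := by
    rintro a b a' b' ⟨⟨hab, hbq, haff, hml, hmr⟩, hS, hT⟩
      ⟨⟨hab', hbq', haff', hml', hmr'⟩, hS', hT'⟩ hlt
    have hbneq : b ≠ q + 1 := by omega
    have hnb1 : Unaffected ends Z (bundleOf ends s p C st (b + 1)) := hmr.resolve_left hbneq
    have ha'b1 : b + 1 < a' := by
      rcases Nat.lt_or_ge (b + 1) a' with h | h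
      · exact h
      · exact absurd hnb1 (haff' (b + 1) (by omega) (by omega))
    obtain ⟨x, hx1, hx2⟩ := hT
    obtain ⟨y, hy1, hy2⟩ := hS'
    have hxB := hstr a b x hbq hx1
    have hyB := hstr a' b' y hbq' hy1
    obtain ⟨w, hw1, hw2⟩ := hcrossT (b + 1) x hx2 (by omega) (by omega)
    obtain ⟨w', hw1', hw2'⟩ := hcrossS (b + 1) y hy2 (by omega)
    have hreach : Reach ends Z w w' :=
      hnb1 w (Set.mem_union_left _ ((hbdl (b + 1) (by omega) w).mpr hw1))
        w' (Set.mem_union_left _ ((hbdl (b + 1) (by omega) w').mpr hw1'))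
    exact cut_not_both hZ hw2' (RS_reach hw2 hreach)
  refine ⟨?_, ?_, ?_⟩
  · -- uniqueness
    intro a b a' b' h1 h2
    obtain ⟨⟨hab, hbq, haff, hml, hmr⟩, hS, hT⟩ := id h1
    obtain ⟨⟨hab', hbq', haff', hml', hmr'⟩, hS', hT'⟩ := id h2
    have hna : ¬ b < a' := fun h => hdisj _ _ _ _ h1 h2 h
    have hnb : ¬ b' < a := fun h => hdisj _ _ _ _ h2 h1 h
    push_neg at hna hnb
    have haa : a = a' := by
      by_contra hne
      rcases Nat.lt_or_ge a a' with h | h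
      · have h0 : a' ≠ 0 := by omega
        exact haff (a' - 1) (by omega) (by omega) (hml'.resolve_left h0)
      · have h0 : a ≠ 0 := by omega
        exact haff' (a - 1) (by omega) (by omega) (hml.resolve_left h0)
    have hbb : b = b' := by
      by_contra hne
      rcases Nat.lt_or_ge b b' with h | h
      · have h0 : b ≠ q + 1 := by omega
        exact haff' (b + 1) (by omega) (by omega) (hmr.resolve_left h0)
      · have h0 : b' ≠ q + 1 := by omega
        exact haff (b' + 1) (by omega) (by omega) (hmr'.resolve_left h0)
    exact ⟨haa, hbb⟩
  · -- interfaces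
    intro a b hSAS
    obtain ⟨⟨hab, hbq, haff, hml, hmr⟩, ⟨x, hx1, hx2⟩, ⟨y, hy1, hy2⟩⟩ := id hSAS
    have hxB := hstr a b x hbq hx1
    have hyB := hstr a b y hbq hy1
    constructor
    · rw [leftInterface]
      split_ifs with ha0
      · intro v hv
        rw [Set.mem_singleton_iff] at hv
        rw [hv]
        exact ⟨s, rfl, .refl⟩
      · rintro v ⟨hvb, e, heC, hvends⟩
        have hun := hml.resolve_left ha0
        have hsta1 : 1 ≤ Nat.succ 0 → True := fun _ => trivial
        have hstapos : 0 < st a := by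
          have := hW.2.2.2.1 0 a (by omega) (by omega)
          rw [hW.1] at this
          omega
        have hstap : st a ≤ p + 1 := by
          have := hW.2.2.2.1 a (q + 2) (by omega) le_rfl
          rw [hW.2.2.1] at this
          omega
        rw [interCut, (show a - 1 + 1 = a by omega)] at heC
        have hvB : bdlIdx ends s p C st q v = a := (hbdl a (by omega) v).mp hvb
        obtain ⟨hv1, hv2, hv3⟩ := bdlIdx_spec hC hW v
        rw [hvB] at hv2 hv3
        obtain ⟨u, hends⟩ := Sym2.mem_iff_exists.mp hvends
        have hends' : ends e = s(u, v) := by rw [hends, Sym2.eq_swap]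
        have hjp : st a - 1 ≤ p := by omega
        have hcross := mincut_cross (canon_min hC hjp) heC hends
        have hvnot : v ∉ RS ends (C (st a - 1)) {s} := by
          rw [mem_RS_iff_blkIdx_le hC hjp]
          omega
        have hu : u ∈ RS ends (C (st a - 1)) {s} := by
          rcases hcross with ⟨h1, h2⟩ | ⟨h1, h2⟩
          · exact absurd h1 hvnot
          · exact h1
        rw [mem_RS_iff_blkIdx_le hC hjp] at hu
        have hadj := blkIdx_adj hC hends'
        have hblku : blkIdx ends s p C u = st a - 1 := by omega
        have hBu : bdlIdx ends s p C st q u = a - 1 := by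
          apply bdlIdx_unique hC hW (by omega)
          · have := hW.2.2.2.1 (a - 1) a (by omega) (by omega)
            omega
          · rw [(show a - 1 + 1 = a by omega)]
            omega
        have humem : u ∈ bundleOf ends s p C st (a - 1) := (hbdl (a - 1) (by omega) u).mpr hBu
        have hvN : v ∈ closedNbhd ends (bundleOf ends s p C st (a - 1)) :=
          Set.mem_union_right _ ⟨u, humem, e, hends'⟩
        obtain ⟨w, hw1, hw2⟩ := hcrossS (a - 1) x hx2 (by omega)
        have hwN : w ∈ closedNbhd ends (bundleOf ends s p C st (a - 1)) :=
          Set.mem_union_left _ ((hbdl (a - 1) (by omega) w).mpr hw1)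
        exact RS_reach hw2 (hun w hwN v hvN)
    · rw [rightInterface]
      split_ifs with hb0
      · intro v hv
        rw [Set.mem_singleton_iff] at hv
        rw [hv]
        exact ⟨t, rfl, .refl⟩
      · rintro v ⟨hvb, e, heC, hvends⟩
        have hun := hmr.resolve_left hb0
        have hb1q : b + 1 ≤ q + 1 := by omega
        have hstpos : 0 < st (b + 1) := by
          have := hW.2.2.2.1 0 (b + 1) (by omega) (by omega)
          rw [hW.1] at this
          omega
        have hstbp : st (b + 1) ≤ p + 1 := by
          have := hW.2.2.2.1 (b + 1) (q + 2) (by omega) le_rfl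
          rw [hW.2.2.1] at this
          omega
        rw [interCut] at heC
        have hvB : bdlIdx ends s p C st q v = b := (hbdl b (by omega) v).mp hvb
        obtain ⟨hv1, hv2, hv3⟩ := bdlIdx_spec hC hW v
        rw [hvB] at hv2 hv3
        obtain ⟨u, hends⟩ := Sym2.mem_iff_exists.mp hvends
        have hends' : ends e = s(u, v) := by rw [hends, Sym2.eq_swap]
        have hjp : st (b + 1) - 1 ≤ p := by omega
        have hcross := mincut_cross (canon_min hC hjp) heC hends
        have hvin : v ∈ RS ends (C (st (b + 1) - 1)) {s} := by
          rw [mem_RS_iff_blkIdx_le hC hjp]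
          omega
        have hu : u ∉ RS ends (C (st (b + 1) - 1)) {s} := by
          rcases hcross with ⟨h1, h2⟩ | ⟨h1, h2⟩
          · exact h2
          · exact absurd hvin h2
        rw [mem_RS_iff_blkIdx_le hC hjp] at hu
        push_neg at hu
        have hadj := blkIdx_adj hC hends
        have hblku : blkIdx ends s p C u = st (b + 1) := by omega
        have hBu : bdlIdx ends s p C st q u = b + 1 := by
          apply bdlIdx_unique hC hW (by omega)
          · omega
          · have := hW.2.2.2.1 (b + 1) (b + 1 + 1) (by omega) (by omega)
            omega
        have humem : u ∈ bundleOf ends s p C st (b + 1) := (hbdl (b + 1) (by omega) u).mpr hBu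
        have hvN : v ∈ closedNbhd ends (bundleOf ends s p C st (b + 1)) :=
          Set.mem_union_right _ ⟨u, humem, e, hends'⟩
        obtain ⟨w, hw1, hw2⟩ := hcrossT (b + 1) y hy2 (by omega) (by omega)
        have hwN : w ∈ closedNbhd ends (bundleOf ends s p C st (b + 1)) :=
          Set.mem_union_left _ ((hbdl (b + 1) (by omega) w).mpr hw1)
        exact RS_reach hw2 (hun w hwN v hvN)
  · -- existence
    intro hsp
    have hne : ∃ e, e ∈ Zst ends s t Z := by
      by_contra hcon
      push_neg at hcon
      have hempty : Zst ends s t Z = ∅ := Set.eq_empty_iff_forall_notMem.mpr hcon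
      have hcut2 := hsp.2
      rw [hempty] at hcut2
      have hs : s ∈ RS ends (∅ : Set E) {s} := ⟨s, rfl, .refl⟩
      have ht : s ∈ RS ends (∅ : Set E) {t} := ⟨t, rfl, hconn t s⟩
      exact cut_not_both hcut2 hs ht
    obtain ⟨e, heZ, u, v, hev, hus, hvt⟩ := hne
    have hBadj1 : bdlIdx ends s p C st q v ≤ bdlIdx ends s p C st q u + 1 :=
      bdlIdx_adj hC hW hev
    have hBadj2 : bdlIdx ends s p C st q u ≤ bdlIdx ends s p C st q v + 1 :=
      bdlIdx_adj hC hW (by rw [hev, Sym2.eq_swap])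
    have hBu : bdlIdx ends s p C st q u ≤ q + 1 := (bdlIdx_spec hC hW u).1
    have hBv : bdlIdx ends s p C st q v ≤ q + 1 := (bdlIdx_spec hC hW v).1
    have haffu : ¬ Unaffected ends Z (bundleOf ends s p C st (bdlIdx ends s p C st q u)) := by
      intro hun
      have h1 : u ∈ closedNbhd ends (bundleOf ends s p C st (bdlIdx ends s p C st q u)) :=
        Set.mem_union_left _ ((hbdl _ hBu u).mpr rfl)
      have h2 : v ∈ closedNbhd ends (bundleOf ends s p C st (bdlIdx ends s p C st q u)) :=
        Set.mem_union_right _ ⟨u, (hbdl _ hBu u).mpr rfl, e, hev⟩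
      exact cut_not_both hZ (RS_reach hus (hun u h1 v h2)) hvt
    have haffv : ¬ Unaffected ends Z (bundleOf ends s p C st (bdlIdx ends s p C st q v)) := by
      intro hun
      have h1 : v ∈ closedNbhd ends (bundleOf ends s p C st (bdlIdx ends s p C st q v)) :=
        Set.mem_union_left _ ((hbdl _ hBv v).mpr rfl)
      have h2 : u ∈ closedNbhd ends (bundleOf ends s p C st (bdlIdx ends s p C st q v)) :=
        Set.mem_union_right _ ⟨v, (hbdl _ hBv v).mpr rfl, e, by rw [hev, Sym2.eq_swap]⟩
      exact cut_not_both hZ hus (RS_reach hvt (hun v h1 u h2))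
    obtain ⟨lo, hi, hlohi, hhi1, hhiq, haffm, xS, hxS, hxSB1, hxSB2, xT, hxT, hxTB1, hxTB2⟩ :
        ∃ lo hi : ℕ, lo ≤ hi ∧ hi ≤ lo + 1 ∧ hi ≤ q + 1 ∧
          (∀ m, lo ≤ m → m ≤ hi → ¬ Unaffected ends Z (bundleOf ends s p C st m)) ∧
          ∃ xS, xS ∈ RS ends Z {s} ∧ lo ≤ bdlIdx ends s p C st q xS ∧
            bdlIdx ends s p C st q xS ≤ hi ∧
          ∃ xT, xT ∈ RS ends Z {t} ∧ lo ≤ bdlIdx ends s p C st q xT ∧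
            bdlIdx ends s p C st q xT ≤ hi := by
      rcases Nat.le_total (bdlIdx ends s p C st q u) (bdlIdx ends s p C st q v) with h | h
      · refine ⟨bdlIdx ends s p C st q u, bdlIdx ends s p C st q v, h, hBadj1, hBv,
          ?_, u, hus, le_rfl, h, v, hvt, h, le_rfl⟩
        intro m h1 h2
        rcases (by omega : m = bdlIdx ends s p C st q u ∨ m = bdlIdx ends s p C st q v)
          with rfl | rfl
        · exact haffu
        · exact haffv
      · refine ⟨bdlIdx ends s p C st q v, bdlIdx ends s p C st q u, h, hBadj2, hBu,
          ?_, u, hus, h, le_rfl, v, hvt, le_rfl, h⟩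
        intro m h1 h2
        rcases (by omega : m = bdlIdx ends s p C st q u ∨ m = bdlIdx ends s p C st q v)
          with rfl | rfl
        · exact haffu
        · exact haffv
    have hQex : ∃ a : ℕ, ∀ m, a ≤ m → m ≤ hi →
        ¬ Unaffected ends Z (bundleOf ends s p C st m) := ⟨lo, haffm⟩
    have hQa := Nat.find_spec hQex
    have halo : Nat.find hQex ≤ lo := Nat.find_min' hQex haffm
    have hamax : Nat.find hQex = 0 ∨
        Unaffected ends Z (bundleOf ends s p C st (Nat.find hQex - 1)) := by
      rcases Nat.eq_zero_or_pos (Nat.find hQex) with h0 | hpos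
      · exact Or.inl h0
      · right
        by_contra hcon
        have hQ' : ∀ m, Nat.find hQex - 1 ≤ m → m ≤ hi →
            ¬ Unaffected ends Z (bundleOf ends s p C st m) := by
          intro m h1 h2
          rcases Nat.eq_or_lt_of_le h1 with heq | hlt2
          · rw [← heq]; exact hcon
          · exact hQa m (by omega) h2
        exact absurd hQ' (Nat.find_min hQex (by omega : Nat.find hQex - 1 < Nat.find hQex))
    have hPhi : hi ≤ hi ∧ ∀ m, hi ≤ m → m ≤ hi →
        ¬ Unaffected ends Z (bundleOf ends s p C st m) := by
      refine ⟨le_rfl, fun m h1 h2 => ?_⟩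
      have : m = hi := le_antisymm h2 h1
      subst this
      exact haffm _ hlohi le_rfl
    set P := fun b : ℕ => hi ≤ b ∧ ∀ m, hi ≤ m → m ≤ b →
        ¬ Unaffected ends Z (bundleOf ends s p C st m) with hP
    have hhib : hi ≤ Nat.findGreatest P (q + 1) := Nat.le_findGreatest hhiq hPhi
    have hPb : P (Nat.findGreatest P (q + 1)) := Nat.findGreatest_spec hhiq hPhi
    have hbq : Nat.findGreatest P (q + 1) ≤ q + 1 := Nat.findGreatest_le _
    have hbmax : Nat.findGreatest P (q + 1) = q + 1 ∨
        Unaffected ends Z (bundleOf ends s p C st (Nat.findGreatest P (q + 1) + 1)) := by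
      rcases Nat.eq_or_lt_of_le hbq with h | h
      · exact Or.inl h
      · right
        by_contra hcon
        have hPb1 : P (Nat.findGreatest P (q + 1) + 1) := by
          refine ⟨by omega, fun m h1 h2 => ?_⟩
          rcases Nat.eq_or_lt_of_le h2 with heq | hlt2
          · rw [heq]; exact hcon
          · exact hPb.2 m h1 (by omega)
        have := Nat.le_findGreatest (by omega : Nat.findGreatest P (q + 1) + 1 ≤ q + 1) hPb1
        omega
    refine ⟨Nat.find hQex, Nat.findGreatest P (q + 1),
      ⟨⟨by omega, hbq, ?_, hamax, hbmax⟩, ⟨xS, ?_, hxS⟩, ⟨xT, ?_, hxT⟩⟩⟩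
    · intro m h1 h2
      rcases Nat.le_total m hi with h | h
      · exact hQa m h1 h
      · exact hPb.2 m h h2
    · rw [stretchSet]
      simp only [Set.mem_iUnion, Set.mem_Icc, exists_prop]
      exact ⟨bdlIdx ends s p C st q xS, ⟨by omega, by omega⟩,
        (hbdl _ (by omega) xS).mpr rfl⟩
    · rw [stretchSet]
      simp only [Set.mem_iUnion, Set.mem_Icc, exists_prop]
      exact ⟨bdlIdx ends s p C st q xT, ⟨by omega, by omega⟩,
        (hbdl _ (by omega) xT).mpr rfl⟩

end FlowAug
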